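/- Given a finite strictly increasing sequence m₀ < m₁ < ⋯ < m_n of nonnegative integers with gaps exactly after m_{i₁} > ⋯ > m_{i_s}, set β_j = m_{i_j}+1 and ℓ_j = m_{i_j} - i_j, let B = ⊕_{j=1}^s Λ/(p^{β_j}) with generators b_{β_j}, and a = Σ_j p^{ℓ_j} b_{β_j}. Then the height sequence of a in B is exactly (m₀, m₁, …, m_n, ∞, ∞, …). -/

import Mathlib

/-!
In `Λ ⧸ (p ^ β)` the element `p ^ t` has height `t` when `t < β` and is zero otherwise, and
heights in a product are the minima of the heights of the coordinates. The coordinate of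
`p ^ i • a` at a gap `g` is `p ^ (i + m g - g)`; since `k ↦ m k - k` is monotone its height is
never below `m i`, and it equals `m i` at the first gap `g ≥ i`, because `m` increases by one at
each step between `i` and that gap.
-/

/-- `b` lies in `p^m B`, i.e. the height of `b` is at least `m`. -/
def inPow {Λ B : Type} [CommRing Λ] [AddCommGroup B] [Module Λ B]
    (p : Λ) (m : ℕ) (b : B) : Prop := ∃ c, b = p ^ m • c

/-- The height of `b` is exactly `m`: `b ∈ p^m B \ p^{m+1} B`. -/
def heightIs {Λ B : Type} [CommRing Λ] [AddCommGroup B] [Module Λ B]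
    (p : Λ) (b : B) (m : ℕ) : Prop := inPow p m b ∧ ¬ inPow p (m + 1) b

lemma inPow_pi_iff {Λ ι : Type} {B : ι → Type} [CommRing Λ]
    [∀ j, AddCommGroup (B j)] [∀ j, Module Λ (B j)] (p : Λ) (k : ℕ) (b : ∀ j, B j) :
    inPow p k b ↔ ∀ j, inPow p k (b j) := by
  refine ⟨fun ⟨c, hc⟩ j => ⟨c j, by rw [hc, Pi.smul_apply]⟩, fun h => ?_⟩
  choose c hc using h
  exact ⟨c, funext hc⟩

section PowerQuotient

variable {Λ : Type} [CommRing Λ] [IsDomain Λ] {p : Λ}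

lemma mk_pow_eq_zero_iff (hp : Irreducible p) {β t : ℕ} :
    Ideal.Quotient.mk (Ideal.span {p ^ β}) (p ^ t) = 0 ↔ β ≤ t := by
  rw [Ideal.Quotient.eq_zero_iff_dvd, pow_dvd_pow_iff hp.ne_zero hp.not_isUnit]

lemma inPow_mk_pow_iff (hp : Irreducible p) {β k t : ℕ} :
    inPow p k (Ideal.Quotient.mk (Ideal.span {p ^ β}) (p ^ t)) ↔ min k β ≤ t := by
  constructor
  · rintro ⟨c, hc⟩
    obtain ⟨c, rfl⟩ := Ideal.Quotient.mk_surjective c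
    have hβ : p ^ β ∣ p ^ t - p ^ k * c := by
      rw [← Ideal.Quotient.eq_zero_iff_dvd, map_sub, sub_eq_zero]
      exact hc
    have hdiff : p ^ min k β ∣ p ^ t - p ^ k * c := (pow_dvd_pow p (min_le_right k β)).trans hβ
    have hmul : p ^ min k β ∣ p ^ k * c := (pow_dvd_pow p (min_le_left k β)).mul_right c
    have hpow : p ^ min k β ∣ p ^ t := by simpa using dvd_add hdiff hmul
    exact (pow_dvd_pow_iff hp.ne_zero hp.not_isUnit).mp hpow
  · intro h
    rcases le_or_gt k t with hkt | htk
    · refine ⟨Ideal.Quotient.mk _ (p ^ (t - k)), ?_⟩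
      change _ = Ideal.Quotient.mk _ (p ^ k * p ^ (t - k))
      rw [← pow_add, Nat.add_sub_cancel' hkt]
    · refine ⟨0, ?_⟩
      rw [smul_zero, mk_pow_eq_zero_iff hp]
      omega

end PowerQuotient

lemma exists_gap_ge_of_strictMono {m : ℕ → ℕ} (hm : StrictMono m) {i n : ℕ} (hi : i ≤ n) :
    ∃ g, i ≤ g ∧ g ≤ n ∧ (g = n ∨ m g + 1 < m (g + 1)) ∧ m g + i = m i + g := by
  induction hi using Nat.decreasingInduction with
  | self => exact ⟨n, le_rfl, le_rfl, Or.inl rfl, rfl⟩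
  | of_succ k hk ih =>
    by_cases hgap : m k + 1 < m (k + 1)
    · exact ⟨k, le_rfl, hk.le, Or.inr hgap, rfl⟩
    · obtain ⟨g, hkg, hgn, hg, heq⟩ := ih
      have := hm (Nat.lt_add_one k)
      exact ⟨g, by omega, hgn, hg, by omega⟩

theorem stmt3_general (Λ : Type) [CommRing Λ] [IsDomain Λ]
    (p : Λ) (hp : Irreducible p)
    (n s : ℕ) (m : ℕ → ℕ) (hm : StrictMono m)
    (idx : Fin s → ℕ) (hle : ∀ j, idx j ≤ n)
    (hgaps : ∀ ℓ ≤ n, (ℓ = n ∨ m ℓ + 1 < m (ℓ + 1)) ↔ ∃ j, idx j = ℓ)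
    (a : ∀ j : Fin s, Λ ⧸ Ideal.span {p ^ (m (idx j) + 1)})
    (ha : a = fun j => Ideal.Quotient.mk (Ideal.span {p ^ (m (idx j) + 1)})
      (p ^ (m (idx j) - idx j))) :
    (∀ i ≤ n, heightIs p (p ^ i • a) (m i)) ∧ p ^ (n + 1) • a = 0 := by
  have coord : ∀ i j, (p ^ i • a) j = Ideal.Quotient.mk _ (p ^ (i + (m (idx j) - idx j))) := by
    intro i j
    rw [ha]
    exact congrArg _ (pow_add p i _).symm
  have hself_le : ∀ k, k ≤ m k := fun _ => hm.le_apply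
  refine ⟨fun i hi => ⟨(inPow_pi_iff ..).mpr fun j => ?_, fun hpow => ?_⟩, funext fun j => ?_⟩
  · rw [coord, inPow_mk_pow_iff hp]
    have := hself_le (idx j)
    rcases le_or_gt i (idx j) with hij | hji
    · have := hm.add_le_nat (idx j - i) i
      rw [Nat.sub_add_cancel hij] at this
      omega
    · omega
  · obtain ⟨g, hig, hgn, hgap, hg⟩ := exists_gap_ge_of_strictMono hm hi
    obtain ⟨j, rfl⟩ := (hgaps g hgn).mp hgap
    have hj := (inPow_pi_iff ..).mp hpow j
    rw [coord, inPow_mk_pow_iff hp] at hj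
    have := hself_le (idx j)
    omega
  · rw [Pi.zero_apply, coord, mk_pow_eq_zero_iff hp]
    have := hle j
    omega

/-- Kaplansky's construction: given a strictly increasing sequence
`m 0 < m 1 < ⋯ < m n` of nonnegative integers, with gaps exactly after the
entries `m (idx 1) > ⋯ > m (idx s)` (a gap occurs after position `ℓ ≤ n` iff
`ℓ = n` or `m (ℓ+1) > m ℓ + 1`), set `β j = m (idx j) + 1`,
`ℓ_j = m (idx j) - idx j`, `B = ⊕_j Λ/(p^{β j})` and
`a = Σ_j p^{ℓ_j} b_{β_j}`.  Then the height sequence of `a` in `B` is exactly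
`(m 0, …, m n, ∞, ∞, …)`. -/
theorem stmt3 (Λ : Type) [CommRing Λ] [IsDomain Λ] [IsDiscreteValuationRing Λ]
    (p : Λ) (hp : Irreducible p)
    (n s : ℕ) (m : ℕ → ℕ) (hm : StrictMono m)
    (idx : Fin s → ℕ) (hanti : StrictAnti idx) (hle : ∀ j, idx j ≤ n)
    (hgaps : ∀ ℓ ≤ n, (ℓ = n ∨ m ℓ + 1 < m (ℓ + 1)) ↔ ∃ j, idx j = ℓ)
    (a : ∀ j : Fin s, Λ ⧸ Ideal.span {p ^ (m (idx j) + 1)})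
    (ha : a = fun j => Ideal.Quotient.mk (Ideal.span {p ^ (m (idx j) + 1)})
      (p ^ (m (idx j) - idx j))) :
    (∀ i ≤ n, heightIs p (p ^ i • a) (m i)) ∧ p ^ (n + 1) • a = 0 :=
  stmt3_general Λ p hp n s m hm idx hle hgaps a ha
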